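/- arXiv:2603.23217 — 3 statements merged into one kernel-verified Lean document; each statement's English description precedes it below -/
import Mathlib

section
/- Fix a positive integer K. For each k = 1,...,K, fix positive reals n_k, c_k, ρ_k, γ_k, t_u_k, t_d_k, t_c_k, h_u_k, h_d_k, p_u_k (maximum uplink power), a real d_k and a real L_k, and fix positive reals N0, B_max, P_max, F_max. Consider the set of tuples (l, D, Du, Dd, B, f, p) ∈ (ℝ^K)^7 satisfying, for every k: (i) l_k ≥ c_k / (2^{(2/n_k)(D_k − L_k)} − 1) + d_k; (ii) D_k > L_k; (iii) D_k ≤ ρ_k · Du_k; (iv) D_k ≤ Dd_k; (v) Du_k ≤ t_u_k · B_k · log₂(1 + h_u_k · p_u_k / (B_k · N0)); (vi) Dd_k ≤ t_d_k · B_k · log₂(1 + h_d_k · p_k / (B_k · N0)); (vii) γ_k · Du_k ≤ t_c_k · f_k; (viii) B_k > 0, f_k ≥ 0, p_k ≥ 0; together with the coupling constraints Σ_k p_k ≤ P_max, Σ_k B_k ≤ B_max, Σ_k f_k ≤ F_max. Then this set is a convex subset of ℝ^{7K}. (Consequently, minimizing the linear objective Σ_k l_k over this set is a convex optimization problem.)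 -/
/-!
The feasible set is an intersection of convex sets. Besides half-spaces there are two kinds of
constraints. The LQR-cost bound (i) together with (ii) is the epigraph of
`D ↦ c / (2 ^ (a (D - L)) - 1)` on `D > L`, convex because `t ↦ 1 / (eᵗ - 1)` has positive second
derivative `eᵗ (eᵗ + 1) / (eᵗ - 1)³` for `t > 0`. The rate constraints (v), (vi) are hypographs of
the Shannon rate `(B, p) ↦ B log₂ (1 + h p / (B N₀))`, which is jointly concave as the perspective
of the concave map `u ↦ log₂ (1 + h u / N₀)`.
-/

open Real Set

lemma convexOn_inv_exp_sub_one : ConvexOn ℝ (Ioi 0) fun t : ℝ => (exp t - 1)⁻¹ := by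
  have hpos : ∀ t ∈ Ioi (0 : ℝ), 0 < exp t - 1 := fun t ht => sub_pos.2 (one_lt_exp_iff.2 ht)
  have hf' : ∀ t ∈ Ioi (0 : ℝ),
      HasDerivAt (fun t => (exp t - 1)⁻¹) (-exp t / (exp t - 1) ^ 2) t := fun t ht =>
    ((hasDerivAt_exp t).sub_const 1).inv (hpos t ht).ne'
  have hf'' : ∀ t ∈ Ioi (0 : ℝ), HasDerivAt (fun t => -exp t / (exp t - 1) ^ 2)
      (exp t * (exp t + 1) / (exp t - 1) ^ 3) t := fun t ht => by
    refine ((hasDerivAt_exp t).fun_neg.fun_div (((hasDerivAt_exp t).sub_const 1).fun_pow 2)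
      (pow_ne_zero 2 (hpos t ht).ne')).congr_deriv ?_
    field_simp [(hpos t ht).ne']
    ring
  refine convexOn_of_hasDerivWithinAt2_nonneg (f' := fun t => -exp t / (exp t - 1) ^ 2)
    (f'' := fun t => exp t * (exp t + 1) / (exp t - 1) ^ 3) (convex_Ioi 0)
    (fun t ht => (hf' t ht).continuousAt.continuousWithinAt) ?_ ?_ ?_ <;> rw [interior_Ioi]
  · exact fun t ht => (hf' t ht).hasDerivWithinAt
  · exact fun t ht => (hf'' t ht).hasDerivWithinAt
  · exact fun t ht => have := hpos t ht; by positivity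

lemma convexOn_div_rpow_sub_one {β a c L : ℝ} (hβ : 1 < β) (ha : 0 < a) (hc : 0 ≤ c) :
    ConvexOn ℝ (Ioi L) fun D => c / (β ^ (a * (D - L)) - 1) := by
  have hrw : ∀ D, c / (β ^ (a * (D - L)) - 1) = c * (exp (log β * a * (D - L)) - 1)⁻¹ :=
    fun D => by rw [rpow_def_of_pos (zero_lt_one.trans hβ), mul_assoc, div_eq_mul_inv]
  have hb : 0 < log β * a := mul_pos (log_pos hβ) ha
  refine ⟨convex_Ioi L, fun x hx y hy θ η hθ hη hθη => ?_⟩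
  have hxy : log β * a * (θ * x + η * y - L) =
      θ * (log β * a * (x - L)) + η * (log β * a * (y - L)) := by
    linear_combination log β * a * L * hθη
  have hexp := (convexOn_inv_exp_sub_one.smul hc).2 (mul_pos hb (sub_pos.2 hx))
    (mul_pos hb (sub_pos.2 hy)) hθ hη hθη
  simp only [smul_eq_mul] at hexp ⊢
  rwa [hrw, hrw, hrw, hxy]

theorem ConcaveOn.perspective {𝕜 E : Type*} [Field 𝕜] [LinearOrder 𝕜] [IsStrictOrderedRing 𝕜]
    [AddCommGroup E] [Module 𝕜 E] {s : Set E} {f : E → 𝕜} (hf : ConcaveOn 𝕜 s f) :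
    ConcaveOn 𝕜 {q : 𝕜 × E | 0 < q.1 ∧ q.1⁻¹ • q.2 ∈ s} fun q => q.1 * f (q.1⁻¹ • q.2) := by
  have hcombine : ∀ ⦃t₁ t₂ : 𝕜⦄ ⦃x₁ x₂ : E⦄, 0 < t₁ → t₁⁻¹ • x₁ ∈ s → 0 < t₂ → t₂⁻¹ • x₂ ∈ s →
      ∀ ⦃a b : 𝕜⦄, 0 ≤ a → 0 ≤ b → a + b = 1 →
      0 < a * t₁ + b * t₂ ∧ (a * t₁ + b * t₂)⁻¹ • (a • x₁ + b • x₂) ∈ s ∧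
      a * (t₁ * f (t₁⁻¹ • x₁)) + b * (t₂ * f (t₂⁻¹ • x₂)) ≤
        (a * t₁ + b * t₂) * f ((a * t₁ + b * t₂)⁻¹ • (a • x₁ + b • x₂)) := by
    intro t₁ t₂ x₁ x₂ ht₁ hx₁ ht₂ hx₂ a b ha hb hab
    set t := a * t₁ + b * t₂
    have ht : 0 < t := convex_Ioi (0 : 𝕜) ht₁ ht₂ ha hb hab
    have hw : a * t₁ / t + b * t₂ / t = 1 := by rw [← add_div, div_self ht.ne']
    have hw₁ : 0 ≤ a * t₁ / t := by positivity
    have hw₂ : 0 ≤ b * t₂ / t := by positivity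
    have hcombo :
        t⁻¹ • (a • x₁ + b • x₂) = (a * t₁ / t) • (t₁⁻¹ • x₁) + (b * t₂ / t) • (t₂⁻¹ • x₂) := by
      simp only [smul_add, smul_smul]
      congr 2 <;> field_simp
    refine ⟨ht, hcombo ▸ hf.1 hx₁ hx₂ hw₁ hw₂ hw, ?_⟩
    calc a * (t₁ * f (t₁⁻¹ • x₁)) + b * (t₂ * f (t₂⁻¹ • x₂))
        = t * (a * t₁ / t * f (t₁⁻¹ • x₁) + b * t₂ / t * f (t₂⁻¹ • x₂)) := by field_simp
      _ ≤ t * f (t⁻¹ • (a • x₁ + b • x₂)) := by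
        rw [hcombo]
        exact mul_le_mul_of_nonneg_left (hf.2 hx₁ hx₂ hw₁ hw₂ hw) ht.le
  refine ⟨?_, ?_⟩ <;> rintro ⟨t₁, x₁⟩ ⟨ht₁, hx₁⟩ ⟨t₂, x₂⟩ ⟨ht₂, hx₂⟩ a b ha hb hab <;>
    simp only [Prod.smul_mk, Prod.mk_add_mk, smul_eq_mul]
  · exact (hcombine ht₁ hx₁ ht₂ hx₂ ha hb hab).imp_right And.left
  · exact (hcombine ht₁ hx₁ ht₂ hx₂ ha hb hab).2.2

lemma concaveOn_logb_one_add_mul {β m : ℝ} (hβ : 1 ≤ β) (hm : 0 ≤ m) :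
    ConcaveOn ℝ (Ici 0) fun u => logb β (1 + m * u) := by
  refine ⟨convex_Ici 0, fun x hx y hy a b ha hb hab => ?_⟩
  have hpos : ∀ u ∈ Ici (0 : ℝ), 1 + m * u ∈ Ioi 0 := fun u hu =>
    show 0 < 1 + m * u by linarith [mul_nonneg hm hu]
  have hlog := strictConcaveOn_log_Ioi.concaveOn.2 (hpos x hx) (hpos y hy) ha hb hab
  have harg : a • (1 + m * x) + b • (1 + m * y) = 1 + m * (a • x + b • y) := by
    simp only [smul_eq_mul]; linear_combination hab
  simp only [logb, smul_eq_mul] at hlog harg ⊢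
  rw [harg] at hlog
  rw [mul_div_assoc', mul_div_assoc', ← add_div]
  exact div_le_div_of_nonneg_right hlog (log_nonneg hβ)

lemma concaveOn_mul_logb_one_add_div {β κ N₀ : ℝ} (hβ : 1 ≤ β) (hκ : 0 ≤ κ) (hN₀ : 0 ≤ N₀) :
    ConcaveOn ℝ (Ioi 0 ×ˢ Ici 0) fun q : ℝ × ℝ => q.1 * logb β (1 + κ * q.2 / (q.1 * N₀)) := by
  refine ((concaveOn_logb_one_add_mul hβ (div_nonneg hκ hN₀)).perspective.subset
    (fun q hq => ⟨hq.1, mul_nonneg (inv_nonneg.2 (le_of_lt hq.1)) (mem_Ici.1 hq.2)⟩)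
    ((convex_Ioi 0).prod (convex_Ici 0))).congr fun q _ => ?_
  simp only [smul_eq_mul]
  ring_nf

theorem stmt0_general (K : ℕ)
    (n c ρ γ tu td tc hu hd pu : Fin K → ℝ)
    (hn : ∀ k, 0 < n k) (hc : ∀ k, 0 < c k)
    (htu : ∀ k, 0 < tu k) (htd : ∀ k, 0 < td k)
    (hhu : ∀ k, 0 < hu k) (hhd : ∀ k, 0 < hd k) (hpu : ∀ k, 0 < pu k)
    (dd L : Fin K → ℝ)
    (N0 Bmax Pmax Fmax : ℝ)
    (hN0 : 0 < N0) :
    Convex ℝ {x : (Fin K → ℝ) × (Fin K → ℝ) × (Fin K → ℝ) × (Fin K → ℝ) ×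
        (Fin K → ℝ) × (Fin K → ℝ) × (Fin K → ℝ) |
      -- x = (l, D, Du, Dd, B, f, p)
      (∀ k, c k / ((2:ℝ) ^ ((2 / n k) * (x.2.1 k - L k)) - 1) + dd k ≤ x.1 k) ∧
      (∀ k, L k < x.2.1 k) ∧
      (∀ k, x.2.1 k ≤ ρ k * x.2.2.1 k) ∧
      (∀ k, x.2.1 k ≤ x.2.2.2.1 k) ∧
      (∀ k, x.2.2.1 k ≤
        tu k * x.2.2.2.2.1 k * Real.logb 2 (1 + hu k * pu k / (x.2.2.2.2.1 k * N0))) ∧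
      (∀ k, x.2.2.2.1 k ≤
        td k * x.2.2.2.2.1 k *
          Real.logb 2 (1 + hd k * x.2.2.2.2.2.2 k / (x.2.2.2.2.1 k * N0))) ∧
      (∀ k, γ k * x.2.2.1 k ≤ tc k * x.2.2.2.2.2.1 k) ∧
      (∀ k, 0 < x.2.2.2.2.1 k) ∧
      (∀ k, 0 ≤ x.2.2.2.2.2.1 k) ∧
      (∀ k, 0 ≤ x.2.2.2.2.2.2 k) ∧
      (∑ k, x.2.2.2.2.2.2 k ≤ Pmax) ∧
      (∑ k, x.2.2.2.2.1 k ≤ Bmax) ∧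
      (∑ k, x.2.2.2.2.2.1 k ≤ Fmax)} := by
  rintro X ⟨hX₁, hX₂, hX₃, hX₄, hX₅, hX₆, hX₇, hX₈, hX₉, hX₁₀, hX₁₁, hX₁₂, hX₁₃⟩
    Y ⟨hY₁, hY₂, hY₃, hY₄, hY₅, hY₆, hY₇, hY₈, hY₉, hY₁₀, hY₁₁, hY₁₂, hY₁₃⟩ a b ha hb hab
  have hmix {x y u v : ℝ} (hx : x ≤ u) (hy : y ≤ v) : a * x + b * y ≤ a * u + b * v := by
    gcongr
  have hsum {x y : Fin K → ℝ} {M : ℝ} (hx : ∑ k, x k ≤ M) (hy : ∑ k, y k ≤ M) :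
      ∑ k, (a * x k + b * y k) ≤ M := by
    rw [Finset.sum_add_distrib, ← Finset.mul_sum, ← Finset.mul_sum]
    exact (hmix hx hy).trans_eq (Convex.combo_self hab M)
  simp only [mem_ofPred_eq, Prod.fst_add, Prod.snd_add, Prod.smul_fst, Prod.smul_snd,
    Pi.add_apply, Pi.smul_apply, smul_eq_mul]
  refine ⟨fun k => ?_, fun k => convex_Ioi (L k) (hX₂ k) (hY₂ k) ha hb hab,
    fun k => ?_, fun k => ?_, fun k => ?_, fun k => ?_, fun k => ?_,
    fun k => convex_Ioi (0 : ℝ) (hX₈ k) (hY₈ k) ha hb hab,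
    fun k => convex_Ici (0 : ℝ) (hX₉ k) (hY₉ k) ha hb hab,
    fun k => convex_Ici (0 : ℝ) (hX₁₀ k) (hY₁₀ k) ha hb hab,
    hsum hX₁₁ hY₁₁, hsum hX₁₂ hY₁₂, hsum hX₁₃ hY₁₃⟩
  · have hcost := (convexOn_div_rpow_sub_one (L := L k) one_lt_two (div_pos two_pos (hn k))
      (hc k).le).add_const (dd k)
    exact (hcost.2 (hX₂ k) (hY₂ k) ha hb hab).trans (hmix (hX₁ k) (hY₁ k))
  · linarith [hmix (hX₃ k) (hY₃ k)]
  · exact hmix (hX₄ k) (hY₄ k)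
  · have hrate := ((concaveOn_mul_logb_one_add_div one_le_two (hhu k).le hN0.le).smul (htu k).le).2
      (mk_mem_prod (hX₈ k) (hpu k).le) (mk_mem_prod (hY₈ k) (hpu k).le) ha hb hab
    rw [Prod.smul_mk, Prod.smul_mk, Prod.mk_add_mk, Convex.combo_self hab] at hrate
    simp only [smul_eq_mul] at hrate
    linarith [hmix (hX₅ k) (hY₅ k)]
  · have hrate := ((concaveOn_mul_logb_one_add_div one_le_two (hhd k).le hN0.le).smul (htd k).le).2
      (mk_mem_prod (hX₈ k) (hX₁₀ k)) (mk_mem_prod (hY₈ k) (hY₁₀ k)) ha hb hab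
    simp only [Prod.smul_mk, Prod.mk_add_mk, smul_eq_mul] at hrate
    linarith [hmix (hX₆ k) (hY₆ k)]
  · linarith [hmix (hX₇ k) (hY₇ k)]

/-- **Theorem 1 of the paper.**  The per-closed-loop resource allocation problem (P3)
is convex: the feasible set of tuples `(l, D, Du, Dd, B, f, p) ∈ (ℝ^K)^7` cut out by the
LQR-cost lower bound, the stability constraint, the CNER constraints, the uplink/downlink
cycle-rate constraints, the computing-latency constraint, the sign constraints and the
coupled power/bandwidth/CPU-frequency budgets is a convex subset of `ℝ^{7K}`. -/
theorem stmt0 (K : ℕ) (hK : 0 < K)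
    (n c ρ γ tu td tc hu hd pu : Fin K → ℝ)
    (hn : ∀ k, 0 < n k) (hc : ∀ k, 0 < c k) (hρ : ∀ k, 0 < ρ k) (hγ : ∀ k, 0 < γ k)
    (htu : ∀ k, 0 < tu k) (htd : ∀ k, 0 < td k) (htc : ∀ k, 0 < tc k)
    (hhu : ∀ k, 0 < hu k) (hhd : ∀ k, 0 < hd k) (hpu : ∀ k, 0 < pu k)
    (dd L : Fin K → ℝ)
    (N0 Bmax Pmax Fmax : ℝ)
    (hN0 : 0 < N0) (hBmax : 0 < Bmax) (hPmax : 0 < Pmax) (hFmax : 0 < Fmax) :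
    Convex ℝ {x : (Fin K → ℝ) × (Fin K → ℝ) × (Fin K → ℝ) × (Fin K → ℝ) ×
        (Fin K → ℝ) × (Fin K → ℝ) × (Fin K → ℝ) |
      -- x = (l, D, Du, Dd, B, f, p)
      (∀ k, c k / ((2:ℝ) ^ ((2 / n k) * (x.2.1 k - L k)) - 1) + dd k ≤ x.1 k) ∧
      (∀ k, L k < x.2.1 k) ∧
      (∀ k, x.2.1 k ≤ ρ k * x.2.2.1 k) ∧
      (∀ k, x.2.1 k ≤ x.2.2.2.1 k) ∧
      (∀ k, x.2.2.1 k ≤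
        tu k * x.2.2.2.2.1 k * Real.logb 2 (1 + hu k * pu k / (x.2.2.2.2.1 k * N0))) ∧
      (∀ k, x.2.2.2.1 k ≤
        td k * x.2.2.2.2.1 k *
          Real.logb 2 (1 + hd k * x.2.2.2.2.2.2 k / (x.2.2.2.2.1 k * N0))) ∧
      (∀ k, γ k * x.2.2.1 k ≤ tc k * x.2.2.2.2.2.1 k) ∧
      (∀ k, 0 < x.2.2.2.2.1 k) ∧
      (∀ k, 0 ≤ x.2.2.2.2.2.1 k) ∧
      (∀ k, 0 ≤ x.2.2.2.2.2.2 k) ∧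
      (∑ k, x.2.2.2.2.2.2 k ≤ Pmax) ∧
      (∑ k, x.2.2.2.2.1 k ≤ Bmax) ∧
      (∑ k, x.2.2.2.2.2.1 k ≤ Fmax)} :=
  stmt0_general K n c ρ γ tu td tc hu hd pu hn hc htu htd hhu hhd hpu dd L N0 Bmax Pmax Fmax hN0
end

section
/- Let c > 0, α > 0, d ∈ ℝ, L ∈ ℝ, and define f : ℝ → ℝ by f(D) = c / (2^{α(D − L)} − 1) + d. Then f is strictly convex on the open interval (L, ∞). -/
/-!
Substituting `y = α log 2 · (D - L)` turns the function into `c · φ(y) + d` with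
`φ(y) = 1 / (eʸ - 1)`. On `y > 0` one computes `φ''(y) = eʸ (eʸ + 1) / (eʸ - 1)³ > 0`, so `φ` is
strictly convex there, and strict convexity survives precomposition with an injective affine map,
multiplication by `c > 0` and addition of `d`.
-/

open Real Set Filter Topology

section StrictConvexity

variable {𝕜 E F β : Type*}

theorem StrictConvexOn.comp_affineMap [Field 𝕜] [LinearOrder 𝕜] [AddCommGroup E] [AddCommGroup F]
    [AddCommMonoid β] [PartialOrder β] [Module 𝕜 E] [Module 𝕜 F] [SMul 𝕜 β] {f : F → β} {s : Set F}
    (g : E →ᵃ[𝕜] F) (hg : Function.Injective g) (hf : StrictConvexOn 𝕜 s f) :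
    StrictConvexOn 𝕜 (g ⁻¹' s) (f ∘ g) :=
  ⟨hf.1.affine_preimage g, fun x hx y hy hxy a b ha hb hab =>
    calc (f ∘ g) (a • x + b • y) = f (a • g x + b • g y) := by
          rw [Function.comp_apply, Convex.combo_affine_apply hab]
      _ < a • f (g x) + b • f (g y) := hf.2 hx hy (hg.ne hxy) ha hb hab⟩

theorem StrictConvexOn.const_mul [AddCommMonoid E] [Module ℝ E] {f : E → ℝ} {s : Set E}
    (hf : StrictConvexOn ℝ s f) {c : ℝ} (hc : 0 < c) : StrictConvexOn ℝ s fun x => c * f x :=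
  ⟨hf.1, fun x hx y hy hxy a b ha hb hab => by
    have := mul_lt_mul_of_pos_left (hf.2 hx hy hxy ha hb hab) hc
    simp only [smul_eq_mul] at this ⊢
    linarith⟩

end StrictConvexity

theorem hasDerivAt_inv_exp_sub_one {y : ℝ} (hy : y ≠ 0) :
    HasDerivAt (fun y => (exp y - 1)⁻¹) (-exp y / (exp y - 1) ^ 2) y :=
  ((hasDerivAt_exp y).sub_const 1).inv (sub_ne_zero.2 (mt (exp_eq_one_iff y).1 hy))

theorem hasDerivAt_neg_exp_div_exp_sub_one_sq {y : ℝ} (hy : y ≠ 0) :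
    HasDerivAt (fun y => -exp y / (exp y - 1) ^ 2) (exp y * (exp y + 1) / (exp y - 1) ^ 3) y := by
  have hne : exp y - 1 ≠ 0 := sub_ne_zero.2 (mt (exp_eq_one_iff y).1 hy)
  refine ((hasDerivAt_exp y).fun_neg.fun_div (((hasDerivAt_exp y).sub_const 1).fun_pow 2)
    (pow_ne_zero 2 hne)).congr_deriv ?_
  field_simp
  ring

theorem strictConvexOn_inv_exp_sub_one : StrictConvexOn ℝ (Ioi 0) fun y => (exp y - 1)⁻¹ := by
  refine strictConvexOn_of_deriv2_pos (convex_Ioi 0)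
    (fun y hy => (hasDerivAt_inv_exp_sub_one (ne_of_gt hy)).continuousAt.continuousWithinAt)
    fun y hy => ?_
  rw [interior_Ioi, mem_Ioi] at hy
  have hderiv : deriv (fun y => (exp y - 1)⁻¹) =ᶠ[𝓝 y] fun y => -exp y / (exp y - 1) ^ 2 :=
    eventually_of_mem (Ioi_mem_nhds hy) fun z hz => (hasDerivAt_inv_exp_sub_one (ne_of_gt hz)).deriv
  have hpos : 0 < exp y - 1 := sub_pos.2 (one_lt_exp_iff.2 hy)
  rw [Function.iterate_succ_apply, Function.iterate_one, hderiv.deriv_eq,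
    (hasDerivAt_neg_exp_div_exp_sub_one_sq hy.ne').deriv]
  positivity

/-- The LQR-cost lower bound `f(D) = c / (2^{α(D − L)} − 1) + d`, viewed as a function of
the closed-loop negentropy rate `D`, is strictly convex on the stability region `(L, ∞)`. -/
theorem stmt1 (c α d L : ℝ) (hc : 0 < c) (hα : 0 < α) :
    StrictConvexOn ℝ (Set.Ioi L)
      (fun D : ℝ => c / ((2:ℝ) ^ (α * (D - L)) - 1) + d) := by
  set k := log 2 * α
  have hk : 0 < k := mul_pos (log_pos one_lt_two) hα
  let g : ℝ →ᵃ[ℝ] ℝ := k • (AffineMap.id ℝ ℝ - AffineMap.const ℝ ℝ L)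
  have hg : ∀ D, g D = k * (D - L) := fun D => rfl
  have hg_inj : Function.Injective g := fun x y hxy => by
    rw [hg, hg] at hxy
    linarith [mul_left_cancel₀ hk.ne' hxy]
  have hpre : g ⁻¹' Ioi 0 = Ioi L := by
    ext D
    simp only [mem_preimage, mem_Ioi, hg, mul_pos_iff_of_pos_left hk, sub_pos]
  have key := ((strictConvexOn_inv_exp_sub_one.comp_affineMap g hg_inj).const_mul hc).add_const d
  rw [hpre] at key
  refine key.congr fun D _ => ?_
  simp only [Pi.add_apply, Function.comp_apply, hg, rpow_def_of_pos two_pos, div_eq_mul_inv,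
    k, mul_assoc]
end

section
/- Let a > 0 and b > 0. The function g(x, y) = a · x · log₂(1 + b · y / x) is concave on the convex set {(x, y) ∈ ℝ² : x > 0, y ≥ 0}. -/
/-! With `f u = log (1 + b u)`, concave on `u ≥ 0`, `g` is `a / log 2` times the perspective
`(x, v) ↦ x f(v / x)` of `f`. Perspectives of concave functions are concave: for `X = μ x₁ + ν x₂`,
`μ x₁ f(v₁/x₁) + ν x₂ f(v₂/x₂) = X (λ₁ f(v₁/x₁) + λ₂ f(v₂/x₂))` with weights `λ₁ = μ x₁ / X`,
`λ₂ = ν x₂ / X` summing to one, and `λ₁ (v₁/x₁) + λ₂ (v₂/x₂) = (μ v₁ + ν v₂) / X`. -/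

open Set

section Perspective

variable {𝕜 E : Type*} [Field 𝕜] [AddCommGroup E] [Module 𝕜 E]

theorem inv_smul_add_smul_eq_perspective {x₁ x₂ μ ν : 𝕜} (v₁ v₂ : E) (h₁ : x₁ ≠ 0)
    (h₂ : x₂ ≠ 0) (hX : μ * x₁ + ν * x₂ ≠ 0) :
    (μ * x₁ + ν * x₂)⁻¹ • (μ • v₁ + ν • v₂) =
      (μ * x₁ / (μ * x₁ + ν * x₂)) • x₁⁻¹ • v₁ + (ν * x₂ / (μ * x₁ + ν * x₂)) • x₂⁻¹ • v₂ := by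
  simp only [smul_smul, smul_add]
  congr 2 <;> field_simp

variable [LinearOrder 𝕜] [IsStrictOrderedRing 𝕜]

theorem perspective_weights {x₁ x₂ μ ν : 𝕜} (h₁ : 0 < x₁) (h₂ : 0 < x₂) (hμ : 0 ≤ μ)
    (hν : 0 ≤ ν) (hμν : μ + ν = 1) :
    0 < μ * x₁ + ν * x₂ ∧ 0 ≤ μ * x₁ / (μ * x₁ + ν * x₂) ∧ 0 ≤ ν * x₂ / (μ * x₁ + ν * x₂) ∧
      μ * x₁ / (μ * x₁ + ν * x₂) + ν * x₂ / (μ * x₁ + ν * x₂) = 1 := by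
  have hX : 0 < μ * x₁ + ν * x₂ := convex_Ioi 0 h₁ h₂ hμ hν hμν
  exact ⟨hX, by positivity, by positivity, by field_simp⟩

theorem ConcaveOn.perspective_s4 {s : Set E} {f : E → 𝕜} (hf : ConcaveOn 𝕜 s f) :
    ConcaveOn 𝕜 {p : 𝕜 × E | 0 < p.1 ∧ p.1⁻¹ • p.2 ∈ s} (fun p => p.1 * f (p.1⁻¹ • p.2)) := by
  refine ⟨?_, ?_⟩
  · rintro ⟨x₁, v₁⟩ ⟨h₁, hv₁⟩ ⟨x₂, v₂⟩ ⟨h₂, hv₂⟩ μ ν hμ hν hμν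
    obtain ⟨hX, hw₁, hw₂, hw⟩ := perspective_weights h₁ h₂ hμ hν hμν
    refine ⟨hX, ?_⟩
    simp only [Prod.smul_mk, Prod.mk_add_mk, smul_eq_mul,
      inv_smul_add_smul_eq_perspective v₁ v₂ h₁.ne' h₂.ne' hX.ne']
    exact hf.1 hv₁ hv₂ hw₁ hw₂ hw
  · rintro ⟨x₁, v₁⟩ ⟨h₁, hv₁⟩ ⟨x₂, v₂⟩ ⟨h₂, hv₂⟩ μ ν hμ hν hμν
    obtain ⟨hX, hw₁, hw₂, hw⟩ := perspective_weights h₁ h₂ hμ hν hμν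
    simp only [Prod.smul_mk, Prod.mk_add_mk, smul_eq_mul,
      inv_smul_add_smul_eq_perspective v₁ v₂ h₁.ne' h₂.ne' hX.ne']
    calc μ * (x₁ * f (x₁⁻¹ • v₁)) + ν * (x₂ * f (x₂⁻¹ • v₂))
        = (μ * x₁ + ν * x₂) * (μ * x₁ / (μ * x₁ + ν * x₂) * f (x₁⁻¹ • v₁)
            + ν * x₂ / (μ * x₁ + ν * x₂) * f (x₂⁻¹ • v₂)) := by
          field_simp
      _ ≤ _ := mul_le_mul_of_nonneg_left (hf.2 hv₁ hv₂ hw₁ hw₂ hw) hX.le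

end Perspective

theorem concaveOn_log_one_add_mul {b : ℝ} (hb : 0 ≤ b) :
    ConcaveOn ℝ (Ici 0) (fun u => Real.log (1 + b * u)) := by
  have hlog := strictConcaveOn_log_Ioi.concaveOn.comp_affineMap (AffineMap.lineMap (1 : ℝ) (1 + b))
  refine (hlog.subset (fun u (hu : 0 ≤ u) => ?_) (convex_Ici 0)).congr fun u _ => ?_
  · simp only [mem_preimage, AffineMap.lineMap_apply_ring', mem_Ioi, add_sub_cancel_left]
    positivity
  · simp only [Function.comp_apply, AffineMap.lineMap_apply_ring']
    ring_nf

/-- The communication rate function `g(x, y) = a·x·log₂(1 + b·y/x)` (bandwidth `x`,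
transmit power `y`) is concave on `{(x, y) : x > 0, y ≥ 0}`. -/
theorem stmt4 (a b : ℝ) (ha : 0 < a) (hb : 0 < b) :
    ConcaveOn ℝ {q : ℝ × ℝ | 0 < q.1 ∧ 0 ≤ q.2}
      (fun q : ℝ × ℝ => a * q.1 * Real.logb 2 (1 + b * q.2 / q.1)) := by
  have hrate : ConcaveOn ℝ (Ici 0) (fun u => a * Real.logb 2 (1 + b * u)) := by
    refine ((concaveOn_log_one_add_mul hb.le).smul (c := a / Real.log 2) ?_).congr fun u _ => ?_
    · have hlog2 := Real.log_pos one_lt_two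
      positivity
    · simp only [smul_eq_mul, Real.logb]
      ring
  have hdom : {q : ℝ × ℝ | 0 < q.1 ∧ 0 ≤ q.2} = {q | 0 < q.1 ∧ q.1⁻¹ • q.2 ∈ Ici 0} := by
    ext ⟨x, y⟩
    simp only [mem_ofPred_eq, mem_Ici, smul_eq_mul]
    exact and_congr_right fun hx => (mul_nonneg_iff_of_pos_left (inv_pos.2 hx)).symm
  rw [hdom]
  refine hrate.perspective_s4.congr fun q _ => ?_
  simp only [smul_eq_mul]
  ring_nf
end
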